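/- Let G be a totally disconnected locally compact group, α a continuous endomorphism of G, and U a compact open subgroup of G. Suppose that for some N ∈ ℕ one has U_N · α⁻¹(U) = U₊ · α⁻¹(U) as subsets of G. Then for all n ≥ N: U_{-n} · α^{-(n+1)}(U) = (U₊ ∩ U_{-n}) · α^{-(n+1)}(U) as subsets of G. -/

import Mathlib

open Pointwise Subgroup Filter

variable {G : Type*}

/-- The `n`-fold iterate of an endomorphism `α : G →* G`, as a monoid homomorphism. -/
def iterHom [Group G] (α : G →* G) : ℕ → G →* G
  | 0 => MonoidHom.id G
  | n + 1 => α.comp (iterHom α n)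

/-- The descending sequence `U_0 = U`, `U_{n+1} = U ⊓ α(U_n)`. -/
def seqU [Group G] (α : G →* G) (U : Subgroup G) : ℕ → Subgroup G
  | 0 => U
  | n + 1 => U ⊓ Subgroup.map α (seqU α U n)

/-- `U₊ = ⋂ₙ Uₙ`. -/
def Uplus [Group G] (α : G →* G) (U : Subgroup G) : Subgroup G := ⨅ n, seqU α U n

/-- `U₋ = ⋂ₙ α^{-n}(U)`. -/
def Uminus [Group G] (α : G →* G) (U : Subgroup G) : Subgroup G :=
  ⨅ n, Subgroup.comap (iterHom α n) U

/-- `U₊₊ = ⋃ₙ αⁿ(U₊)` as a subset of `G`. -/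
def Upp [Group G] (α : G →* G) (U : Subgroup G) : Set G :=
  ⋃ n, iterHom α n '' (Uplus α U : Set G)

/-- `U₋₋ = ⋃ₙ α^{-n}(U₋)` as a subset of `G`. -/
def Umm [Group G] (α : G →* G) (U : Subgroup G) : Set G :=
  ⋃ n, iterHom α n ⁻¹' (Uminus α U : Set G)

/-- `U₋ₙ = ⋂_{k=0}^{n} α^{-k}(U)`. -/
def Uneg [Group G] (α : G →* G) (U : Subgroup G) (n : ℕ) : Subgroup G :=
  ⨅ k ∈ Finset.range (n + 1), Subgroup.comap (iterHom α k) U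

/-- `U` is tidy above for `α` if `U = U₊U₋`. -/
def TidyAbove [Group G] (α : G →* G) (U : Subgroup G) : Prop :=
  (U : Set G) = (Uplus α U : Set G) * (Uminus α U : Set G)

/-- `U` is tidy below for `α` if `U₋₋` is closed. -/
def TidyBelow [Group G] [TopologicalSpace G] (α : G →* G) (U : Subgroup G) : Prop :=
  IsClosed (Umm α U)

/-- `U` is tidy for `α` if it is tidy above and tidy below for `α`. -/
def Tidy [Group G] [TopologicalSpace G] (α : G →* G) (U : Subgroup G) : Prop :=
  TidyAbove α U ∧ TidyBelow α U

/-- The scale of `α`: the minimum of `[α(V) : α(V) ∩ V]` over compact open subgroups `V`. -/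
noncomputable def scale [Group G] [TopologicalSpace G] (α : G →* G) : ℕ :=
  sInf {n : ℕ | ∃ V : Subgroup G, IsCompact (V : Set G) ∧ IsOpen (V : Set G) ∧
    n = Subgroup.relIndex V (Subgroup.map α V)}


private lemma aux_t2 [Group G] [TopologicalSpace G] [IsTopologicalGroup G]
    [TotallyDisconnectedSpace G] : T2Space G := by
  have : T1Space G := ⟨fun x => by
    have h := (totallyDisconnectedSpace_iff_connectedComponent_singleton.mp ‹_› x)
    rw [← h]; exact isClosed_connectedComponent⟩
  infer_instance

private lemma iterHom_succ' [Group G] (α : G →* G) (n : ℕ) (x : G) :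
    iterHom α (n + 1) x = iterHom α n (α x) := by
  induction n with
  | zero => rfl
  | succ n ih =>
    show α (iterHom α (n + 1) x) = α (iterHom α n (α x))
    rw [ih]

private lemma seqU_succ_le [Group G] (α : G →* G) (U : Subgroup G) :
    ∀ n, seqU α U (n + 1) ≤ seqU α U n
  | 0 => inf_le_left
  | n + 1 => inf_le_inf le_rfl (Subgroup.map_mono (seqU_succ_le α U n))

private lemma seqU_antitone [Group G] (α : G →* G) (U : Subgroup G) :
    Antitone (seqU α U) :=
  antitone_nat_of_succ_le (seqU_succ_le α U)

private lemma mem_Uneg [Group G] {α : G →* G} {U : Subgroup G} {n : ℕ} {x : G} :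
    x ∈ Uneg α U n ↔ ∀ k ≤ n, iterHom α k x ∈ U := by
  simp [Uneg, Subgroup.mem_iInf, Nat.lt_succ_iff]

private lemma iter_mem_seqU [Group G] {α : G →* G} {U : Subgroup G} :
    ∀ n, ∀ {x : G}, x ∈ Uneg α U n → iterHom α n x ∈ seqU α U n
  | 0, x, hx => mem_Uneg.mp hx 0 le_rfl
  | n + 1, x, hx => by
    have h1 : x ∈ Uneg α U n :=
      mem_Uneg.mpr fun k hk => mem_Uneg.mp hx k (hk.trans (Nat.le_succ n))
    have h2 := iter_mem_seqU n h1
    show iterHom α (n + 1) x ∈ U ⊓ Subgroup.map α (seqU α U n)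
    exact Subgroup.mem_inf.mpr ⟨mem_Uneg.mp hx (n + 1) le_rfl,
      Subgroup.mem_map.mpr ⟨iterHom α n x, h2, rfl⟩⟩

private lemma seqU_compact [Group G] [TopologicalSpace G] [T2Space G]
    {α : G →* G} (hα : Continuous α) {U : Subgroup G} (hUc : IsCompact (U : Set G)) :
    ∀ n, IsCompact (seqU α U n : Set G)
  | 0 => hUc
  | n + 1 => by
    have h : (seqU α U (n + 1) : Set G)
        = (U : Set G) ∩ (α '' (seqU α U n : Set G)) := by
      show ((U ⊓ Subgroup.map α (seqU α U n) : Subgroup G) : Set G) = _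
      rw [Subgroup.coe_inf, Subgroup.coe_map]
    rw [h]
    exact hUc.inter ((seqU_compact hα hUc n).image hα)

private lemma Uplus_sub [Group G] [TopologicalSpace G] [T2Space G]
    {α : G →* G} (hα : Continuous α) {U : Subgroup G} (hUc : IsCompact (U : Set G))
    {p : G} (hp : p ∈ Uplus α U) : ∃ v ∈ Uplus α U, α v = p := by
  set t : ℕ → Set G := fun n => (seqU α U n : Set G) ∩ α ⁻¹' {p} with ht
  have hsub : ∀ n, t (n + 1) ⊆ t n := fun n =>
    Set.inter_subset_inter_left _ (SetLike.coe_subset_coe.mpr (seqU_succ_le α U n))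
  have hne : ∀ n, (t n).Nonempty := by
    intro n
    have hp' : p ∈ U ⊓ Subgroup.map α (seqU α U n) := Subgroup.mem_iInf.mp hp (n + 1)
    obtain ⟨v, hv, hve⟩ := Subgroup.mem_map.mp (Subgroup.mem_inf.mp hp').2
    exact ⟨v, hv, hve⟩
  have hcl : ∀ n, IsClosed (t n) := fun n =>
    ((seqU_compact hα hUc n).isClosed).inter (isClosed_singleton.preimage hα)
  have hc0 : IsCompact (t 0) := (seqU_compact hα hUc 0).inter_right
    (isClosed_singleton.preimage hα)
  obtain ⟨v, hv⟩ :=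
    IsCompact.nonempty_iInter_of_sequence_nonempty_isCompact_isClosed t hsub hne hc0 hcl
  refine ⟨v, Subgroup.mem_iInf.mpr fun n => (Set.mem_iInter.mp hv n).1, ?_⟩
  exact (Set.mem_iInter.mp hv 0).2

private lemma Uplus_iter [Group G] [TopologicalSpace G] [T2Space G]
    {α : G →* G} (hα : Continuous α) {U : Subgroup G} (hUc : IsCompact (U : Set G)) :
    ∀ n, ∀ {p : G}, p ∈ Uplus α U →
      ∃ v, iterHom α n v = p ∧ ∀ k ≤ n, iterHom α k v ∈ Uplus α U
  | 0, p, hp => ⟨p, rfl, fun k hk => by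
      obtain rfl := Nat.le_zero.mp hk
      exact hp⟩
  | n + 1, p, hp => by
    obtain ⟨v, hvn, hvk⟩ := Uplus_iter hα hUc n hp
    obtain ⟨u, hu, hue⟩ := Uplus_sub hα hUc (hvk 0 (Nat.zero_le n))
    refine ⟨u, ?_, ?_⟩
    · rw [iterHom_succ', hue]
      exact hvn
    · intro k hk
      match k with
      | 0 => exact hu
      | j + 1 =>
        rw [iterHom_succ', hue]
        exact hvk j (Nat.succ_le_succ_iff.mp hk)

/-- If `U_N · α⁻¹(U) = U₊ · α⁻¹(U)` for some `N`, then for all `n ≥ N`,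
`U₋ₙ · α^{-(n+1)}(U) = (U₊ ∩ U₋ₙ) · α^{-(n+1)}(U)`. -/
theorem seq_coset_eq [Group G] [TopologicalSpace G] [IsTopologicalGroup G]
    [TotallyDisconnectedSpace G] [LocallyCompactSpace G]
    (α : G →* G) (hα : Continuous α)
    (U : Subgroup G) (hUc : IsCompact (U : Set G)) (hUo : IsOpen (U : Set G))
    (N : ℕ)
    (hN : (seqU α U N : Set G) * (Subgroup.comap α U : Set G)
        = (Uplus α U : Set G) * (Subgroup.comap α U : Set G)) :
    ∀ n : ℕ, N ≤ n →
      (Uneg α U n : Set G) * (Subgroup.comap (iterHom α (n + 1)) U : Set G)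
        = ((Uplus α U ⊓ Uneg α U n : Subgroup G) : Set G)
            * (Subgroup.comap (iterHom α (n + 1)) U : Set G) := by
  haveI : T2Space G := aux_t2
  intro n hn
  apply Set.Subset.antisymm
  · rintro z hz
    rw [Set.mem_mul] at hz
    obtain ⟨x, hx, y, hy, rfl⟩ := hz
    have hx' : x ∈ Uneg α U n := hx
    have hy' : y ∈ Subgroup.comap (iterHom α (n + 1)) U := hy
    have hq : iterHom α n x ∈ seqU α U N :=
      seqU_antitone α U hn (iter_mem_seqU n hx')
    have hq1 : iterHom α n x * 1 ∈ (seqU α U N : Set G) * (Subgroup.comap α U : Set G) :=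
      Set.mul_mem_mul hq (Subgroup.one_mem _)
    rw [mul_one, hN] at hq1
    obtain ⟨p, hp, w, hw, hpw⟩ := Set.mem_mul.mp hq1
    have hp' : p ∈ Uplus α U := hp
    have hw' : α w ∈ U := hw
    obtain ⟨u, hun, huk⟩ := Uplus_iter hα hUc n hp'
    have huU : u ∈ Uplus α U := huk 0 (Nat.zero_le n)
    have huNeg : u ∈ Uneg α U n :=
      mem_Uneg.mpr fun k hk => Subgroup.mem_iInf.mp (huk k hk) 0
    refine Set.mem_mul.mpr ⟨u, ?_, u⁻¹ * (x * y), ?_, by group⟩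
    · exact Subgroup.mem_inf.mpr ⟨huU, huNeg⟩
    · show u⁻¹ * (x * y) ∈ Subgroup.comap (iterHom α (n + 1)) U
      rw [Subgroup.mem_comap]
      have e1 : iterHom α (n + 1) x = α p * α w := by
        show α (iterHom α n x) = α p * α w
        rw [← hpw, map_mul]
      have e2 : iterHom α (n + 1) u = α p := by
        show α (iterHom α n u) = α p
        rw [hun]
      rw [map_mul, map_mul, map_inv, e1, e2]
      have e3 : (α p)⁻¹ * (α p * α w * iterHom α (n + 1) y)
          = α w * iterHom α (n + 1) y := by group
      rw [e3]
      exact mul_mem hw' hy'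
  · exact Set.mul_subset_mul_right (SetLike.coe_subset_coe.mpr inf_le_right)
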